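/- Let 0 ≤ ε ≤ 1, let 𝒫 be an existential instance of points s₁,…,sₙ ∈ ℝ^d with probabilities p₁,…,pₙ, let f : {s₁,…,sₙ} → [0,∞), and let O ⊆ {1,…,n} satisfy Σ_{i∈O} pᵢ ≤ ε. For a realization P, let Z(P) = max_{sᵢ∈P} f(sᵢ) (with Z(∅) = 0), and let Ē denote the event that P contains at least one point sᵢ with i ∈ O. Then (1−ε)·Σ_{i∈O} pᵢ·f(sᵢ) ≤ E_{P∼𝒫}[Z(P)·1_{Ē}(P)] ≤ Σ_{i∈O} pᵢ·f(sᵢ) + ε·E_{P∼𝒫}[Z(P)]. -/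

import Mathlib

/-- Max of `f` over a finite set, with value `0` on the empty set. -/
noncomputable def maxVal {α : Type*} (P : Finset α) (f : α → ℝ) : ℝ :=
  P.fold max 0 f

/-- Expectation over realizations in the existential uncertainty model:
each index `i` is present independently with probability `p i`. -/
noncomputable def expVal {n : ℕ} (p : Fin n → ℝ) (g : Finset (Fin n) → ℝ) : ℝ :=
  ∑ A : Finset (Fin n), (∏ i ∈ A, p i) * (∏ i ∈ Aᶜ, (1 - p i)) * g A

/-!
Both bounds come from pointwise bounds on `Z · 1_Ē` by sums over `i ∈ O` of terms
`1[sᵢ ∈ P] · g(P)` with `g` independent of whether `sᵢ` is present, so that each term has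
expectation `pᵢ · E[g]`.

Upper bound: `Z(P) · 1_Ē ≤ ∑_{i ∈ O} 1[sᵢ ∈ P] · (f(sᵢ) + Z(P \ O))`, and
`∑_{i ∈ O} pᵢ ≤ ε`.

Lower bound: `Z(P) · 1_Ē ≥ ∑_{i ∈ O} 1[sᵢ ∈ P] · f(sᵢ) · 1[P misses O \ {i}]`, since at most
one term is nonzero; by the union bound `P misses O \ {i}` has probability at least `1 - ε`.
-/

open Finset

noncomputable def realizationProb {n : ℕ} (p : Fin n → ℝ) (A : Finset (Fin n)) : ℝ :=
  (∏ i ∈ A, p i) * ∏ i ∈ Aᶜ, (1 - p i)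

section expVal

variable {n : ℕ} {p : Fin n → ℝ}

lemma expVal_eq_sum (p : Fin n → ℝ) (g : Finset (Fin n) → ℝ) :
    expVal p g = ∑ A, realizationProb p A * g A :=
  rfl

lemma realizationProb_nonneg (hp0 : ∀ i, 0 ≤ p i) (hp1 : ∀ i, p i ≤ 1) (A : Finset (Fin n)) :
    0 ≤ realizationProb p A :=
  mul_nonneg (prod_nonneg fun i _ => hp0 i) (prod_nonneg fun i _ => sub_nonneg.2 (hp1 i))

lemma sum_realizationProb (p : Fin n → ℝ) : ∑ A, realizationProb p A = 1 := by
  have h := prod_add p (fun i => 1 - p i) univ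
  simp only [add_sub_cancel, prod_const_one, powerset_univ, ← compl_eq_univ_sdiff] at h
  exact h.symm

lemma mul_realizationProb_of_notMem {i : Fin n} {A : Finset (Fin n)} (hi : i ∉ A) :
    p i * realizationProb p A = (1 - p i) * realizationProb p (insert i A) := by
  rw [realizationProb, realizationProb, prod_insert hi, compl_insert,
    ← mul_prod_erase Aᶜ (fun j => 1 - p j) (mem_compl.2 hi)]
  ring

lemma expVal_const (p : Fin n → ℝ) (c : ℝ) : expVal p (fun _ => c) = c := by
  rw [expVal_eq_sum, ← sum_mul, sum_realizationProb, one_mul]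

lemma expVal_add (g h : Finset (Fin n) → ℝ) :
    expVal p (fun A => g A + h A) = expVal p g + expVal p h := by
  simp only [expVal_eq_sum, mul_add, sum_add_distrib]

lemma expVal_sub (g h : Finset (Fin n) → ℝ) :
    expVal p (fun A => g A - h A) = expVal p g - expVal p h := by
  simp only [expVal_eq_sum, mul_sub, sum_sub_distrib]

lemma expVal_const_mul (c : ℝ) (g : Finset (Fin n) → ℝ) :
    expVal p (fun A => c * g A) = c * expVal p g := by
  simp only [expVal_eq_sum, mul_sum, mul_left_comm c]

lemma expVal_sum {ι : Type*} (s : Finset ι) (g : ι → Finset (Fin n) → ℝ) :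
    expVal p (fun A => ∑ i ∈ s, g i A) = ∑ i ∈ s, expVal p (g i) := by
  simp only [expVal_eq_sum, mul_sum]
  exact sum_comm

lemma expVal_mono (hp0 : ∀ i, 0 ≤ p i) (hp1 : ∀ i, p i ≤ 1) {g h : Finset (Fin n) → ℝ}
    (hgh : ∀ A, g A ≤ h A) : expVal p g ≤ expVal p h :=
  sum_le_sum fun A _ => mul_le_mul_of_nonneg_left (hgh A) (realizationProb_nonneg hp0 hp1 A)

lemma expVal_ite_mem {i : Fin n} {g : Finset (Fin n) → ℝ} (hg : ∀ A, g (A.erase i) = g A) :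
    expVal p (fun A => if i ∈ A then g A else 0) = p i * expVal p g := by
  have huniv : (univ : Finset (Fin n)) = insert i (univ.erase i) :=
    (insert_erase (mem_univ i)).symm
  rw [expVal_eq_sum, expVal_eq_sum, ← powerset_univ, huniv,
    sum_powerset_insert (notMem_erase i univ), sum_powerset_insert (notMem_erase i univ),
    ← sum_add_distrib, ← sum_add_distrib, mul_sum]
  refine sum_congr rfl fun A hA => ?_
  have hiA : i ∉ A := fun h => notMem_erase i univ (mem_powerset.1 hA h)
  have hg' : g (insert i A) = g A := by rw [← hg, erase_insert hiA]
  rw [if_neg hiA, if_pos (mem_insert_self i A), hg']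
  linear_combination (-g A) * mul_realizationProb_of_notMem (p := p) hiA

lemma expVal_ite_mem_one (i : Fin n) : expVal p (fun A => if i ∈ A then 1 else 0) = p i := by
  rw [expVal_ite_mem (g := fun _ => 1) fun _ => rfl, expVal_const, mul_one]

lemma one_sub_sum_le_expVal_disjoint (hp0 : ∀ i, 0 ≤ p i) (hp1 : ∀ i, p i ≤ 1)
    (S : Finset (Fin n)) :
    1 - ∑ j ∈ S, p j ≤ expVal p (fun A => if Disjoint A S then 1 else 0) := by
  calc 1 - ∑ j ∈ S, p j = expVal p (fun A => 1 - ∑ j ∈ S, if j ∈ A then 1 else 0) := by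
        rw [expVal_sub, expVal_const, expVal_sum (g := fun j A => if j ∈ A then 1 else 0)]
        simp only [expVal_ite_mem_one]
    _ ≤ _ := expVal_mono hp0 hp1 fun A => ?_
  have hterm : ∀ j ∈ S, (0 : ℝ) ≤ if j ∈ A then 1 else 0 := fun j _ => by
    split_ifs <;> norm_num
  split_ifs with h
  · linarith [sum_nonneg hterm]
  · obtain ⟨j, hjA, hjS⟩ := not_disjoint_iff.1 h
    have hj := single_le_sum hterm hjS
    rw [if_pos hjA] at hj
    linarith

end expVal

section maxVal

variable {α : Type*} {f : α → ℝ} {A B : Finset α}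

lemma maxVal_le_iff {c : ℝ} : maxVal A f ≤ c ↔ 0 ≤ c ∧ ∀ i ∈ A, f i ≤ c :=
  fold_max_le c

lemma maxVal_nonneg : 0 ≤ maxVal A f :=
  (le_fold_max 0).2 (Or.inl le_rfl)

lemma le_maxVal {i : α} (hi : i ∈ A) : f i ≤ maxVal A f :=
  (le_fold_max (f i)).2 (Or.inr ⟨i, hi, le_rfl⟩)

lemma maxVal_mono (h : A ⊆ B) : maxVal A f ≤ maxVal B f :=
  maxVal_le_iff.2 ⟨maxVal_nonneg, fun _ hi => le_maxVal (h hi)⟩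

variable [DecidableEq α]

lemma maxVal_le_sum_inter_add_maxVal_sdiff (hf : ∀ i, 0 ≤ f i) (O : Finset α) :
    maxVal A f ≤ ∑ i ∈ A ∩ O, f i + maxVal (A \ O) f := by
  have hsum : 0 ≤ ∑ i ∈ A ∩ O, f i := sum_nonneg fun i _ => hf i
  refine maxVal_le_iff.2 ⟨add_nonneg hsum maxVal_nonneg, fun i hi => ?_⟩
  by_cases hiO : i ∈ O
  · linarith [single_le_sum (fun j _ => hf j) (mem_inter.2 ⟨hi, hiO⟩),
      maxVal_nonneg (A := A \ O) (f := f)]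
  · linarith [le_maxVal (f := f) (mem_sdiff.2 ⟨hi, hiO⟩)]

lemma ite_nonempty_maxVal_le (hf : ∀ i, 0 ≤ f i) (A O : Finset α) :
    (if (A ∩ O).Nonempty then maxVal A f else 0) ≤
      ∑ i ∈ O, if i ∈ A then f i + maxVal (A \ O) f else 0 := by
  rw [sum_ite_mem, inter_comm O A]
  split_ifs with h
  · obtain ⟨j, hj⟩ := h
    calc maxVal A f ≤ ∑ i ∈ A ∩ O, f i + maxVal (A \ O) f :=
          maxVal_le_sum_inter_add_maxVal_sdiff hf O
      _ ≤ ∑ i ∈ A ∩ O, (f i + maxVal (A \ O) f) := by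
          rw [sum_add_distrib]
          gcongr
          exact single_le_sum (f := fun _ => maxVal (A \ O) f) (fun _ _ => maxVal_nonneg) hj
  · exact sum_nonneg fun i _ => add_nonneg (hf i) maxVal_nonneg

lemma sum_ite_mem_disjoint_le (A O : Finset α) :
    ∑ i ∈ O, (if i ∈ A then f i * (if Disjoint A (O.erase i) then 1 else 0) else 0) ≤
      if (A ∩ O).Nonempty then maxVal A f else 0 := by
  split_ifs with h
  · obtain ⟨j, hj⟩ := h
    obtain ⟨hjA, hjO⟩ := mem_inter.1 hj
    rw [sum_eq_single_of_mem j hjO]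
    · rw [if_pos hjA]
      split_ifs
      · simpa using le_maxVal hjA
      · simpa using maxVal_nonneg
    · intro i _ hij
      have : ¬ Disjoint A (O.erase i) := not_disjoint_iff.2 ⟨j, hjA, mem_erase.2 ⟨hij.symm, hjO⟩⟩
      simp [this]
  · refine (sum_eq_zero fun i hiO => ?_).le
    rw [if_neg fun hiA => h ⟨i, mem_inter.2 ⟨hiA, hiO⟩⟩]

end maxVal

section bounds

variable {n : ℕ} {p f : Fin n → ℝ} {O : Finset (Fin n)} {ε : ℝ}

lemma le_expVal_ite_nonempty_maxVal (hp0 : ∀ i, 0 ≤ p i) (hp1 : ∀ i, p i ≤ 1)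
    (hf : ∀ i, 0 ≤ f i) (hO : ∑ i ∈ O, p i ≤ ε) :
    (1 - ε) * ∑ i ∈ O, p i * f i ≤
      expVal p (fun A => if (A ∩ O).Nonempty then maxVal A f else 0) := by
  calc (1 - ε) * ∑ i ∈ O, p i * f i
      ≤ ∑ i ∈ O, p i * (f i * (1 - ∑ j ∈ O.erase i, p j)) := by
        rw [mul_sum]
        refine sum_le_sum fun i _ => ?_
        have hε : 1 - ε ≤ 1 - ∑ j ∈ O.erase i, p j := by
          linarith [sum_le_sum_of_subset_of_nonneg (erase_subset i O) fun j _ _ => hp0 j]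
        linarith [mul_le_mul_of_nonneg_right hε (mul_nonneg (hp0 i) (hf i))]
    _ ≤ ∑ i ∈ O, p i * (f i * expVal p (fun A => if Disjoint A (O.erase i) then 1 else 0)) := by
        gcongr with i
        · exact hp0 i
        · exact hf i
        · exact one_sub_sum_le_expVal_disjoint hp0 hp1 _
    _ = expVal p (fun A => ∑ i ∈ O,
          if i ∈ A then f i * (if Disjoint A (O.erase i) then 1 else 0) else 0) := by
        rw [expVal_sum]
        refine sum_congr rfl fun i _ => ?_
        rw [expVal_ite_mem fun A => by simp only [disjoint_erase_comm, erase_idem],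
          expVal_const_mul]
    _ ≤ _ := expVal_mono hp0 hp1 fun A => sum_ite_mem_disjoint_le A O

lemma expVal_ite_nonempty_maxVal_le (hp0 : ∀ i, 0 ≤ p i) (hp1 : ∀ i, p i ≤ 1)
    (hf : ∀ i, 0 ≤ f i) (hO : ∑ i ∈ O, p i ≤ ε) :
    expVal p (fun A => if (A ∩ O).Nonempty then maxVal A f else 0) ≤
      ∑ i ∈ O, p i * f i + ε * expVal p (fun A => maxVal A f) := by
  have hZ : 0 ≤ expVal p (fun A => maxVal A f) := by
    simpa only [expVal_const] using expVal_mono hp0 hp1 (g := fun _ => 0) fun A => maxVal_nonneg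
  calc _ ≤ expVal p (fun A => ∑ i ∈ O, if i ∈ A then f i + maxVal (A \ O) f else 0) :=
        expVal_mono hp0 hp1 fun A => ite_nonempty_maxVal_le hf A O
    _ = ∑ i ∈ O, p i * (f i + expVal p (fun A => maxVal (A \ O) f)) := by
        rw [expVal_sum]
        refine sum_congr rfl fun i hi => ?_
        rw [expVal_ite_mem fun A => by
            rw [erase_sdiff_comm, erase_eq_of_notMem fun h => (mem_sdiff.1 h).2 hi],
          expVal_add, expVal_const]
    _ ≤ ∑ i ∈ O, p i * (f i + expVal p (fun A => maxVal A f)) := by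
        gcongr with i
        · exact hp0 i
        · exact expVal_mono hp0 hp1 fun A => maxVal_mono sdiff_subset
    _ = ∑ i ∈ O, p i * f i + (∑ i ∈ O, p i) * expVal p (fun A => maxVal A f) := by
        rw [sum_mul, ← sum_add_distrib]
        simp only [mul_add]
    _ ≤ _ := by gcongr

end bounds

theorem stmt10_general (n : ℕ) (ε : ℝ) (p : Fin n → ℝ)
    (hp0 : ∀ i, 0 ≤ p i) (hp1 : ∀ i, p i ≤ 1)
    (f : Fin n → ℝ) (hf : ∀ i, 0 ≤ f i)
    (O : Finset (Fin n)) (hO : (∑ i ∈ O, p i) ≤ ε) :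
    (1 - ε) * (∑ i ∈ O, p i * f i) ≤
      expVal p (fun A => if (A ∩ O).Nonempty then maxVal A f else 0) ∧
    expVal p (fun A => if (A ∩ O).Nonempty then maxVal A f else 0) ≤
      (∑ i ∈ O, p i * f i) + ε * expVal p (fun A => maxVal A f) :=
  ⟨le_expVal_ite_nonempty_maxVal hp0 hp1 hf hO, expVal_ite_nonempty_maxVal_le hp0 hp1 hf hO⟩

theorem stmt10 (d n : ℕ) (ε : ℝ) (hε0 : 0 ≤ ε) (hε1 : ε ≤ 1)
    (s : Fin n → EuclideanSpace ℝ (Fin d)) (p : Fin n → ℝ)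
    (hp0 : ∀ i, 0 ≤ p i) (hp1 : ∀ i, p i ≤ 1)
    (f : Fin n → ℝ) (hf : ∀ i, 0 ≤ f i)
    (O : Finset (Fin n)) (hO : (∑ i ∈ O, p i) ≤ ε) :
    (1 - ε) * (∑ i ∈ O, p i * f i) ≤
      expVal p (fun A => if (A ∩ O).Nonempty then maxVal A f else 0) ∧
    expVal p (fun A => if (A ∩ O).Nonempty then maxVal A f else 0) ≤
      (∑ i ∈ O, p i * f i) + ε * expVal p (fun A => maxVal A f) :=
  stmt10_general n ε p hp0 hp1 f hf O hO
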